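/- For all global variables f, g : Ω → ℝ̄, every real λ ≥ 0, every real μ, and every situation s, the game-theoretic upper expectation satisfies: (V1) E_V(f|s) ≤ sup_{ω∈Γ(s)} f(ω); (V2) E_V(f+g|s) ≤ E_V(f|s) + E_V(g|s); (V3) E_V(λ·f|s) = λ·E_V(f|s); (V4) if f(ω) ≤ g(ω) for all ω ∈ Γ(s) then E_V(f|s) ≤ E_V(g|s); (V5) inf_{ω∈Γ(s)} f(ω) ≤ −E_V(−f|s) ≤ E_V(f|s) ≤ sup_{ω∈Γ(s)} f(ω); (V6) E_V(f+μ|s) = E_V(f|s) + μ. -/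

import Mathlib

open Filter Topology

noncomputable section

/-- Addition on the extended reals with the convention `(+∞) + (−∞) = (−∞) + (+∞) = +∞`. -/
def eadd (a b : EReal) : EReal := if a = ⊤ ∨ b = ⊤ then ⊤ else a + b

/-- An extended real variable is bounded below. -/
def BddBelowF {Y : Type*} (f : Y → EReal) : Prop := ∃ M : ℝ, ∀ y, (M : EReal) ≤ f y

/-- (E1): constants are preserved. -/
def UE1 {Y : Type*} (E : (Y → EReal) → EReal) : Prop :=
  ∀ c : ℝ, E (fun _ => (c : EReal)) = (c : EReal)

/-- (E2): sub-additivity on bounded below variables. -/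
def UE2 {Y : Type*} (E : (Y → EReal) → EReal) : Prop :=
  ∀ f g : Y → EReal, BddBelowF f → BddBelowF g →
    E (fun y => eadd (f y) (g y)) ≤ eadd (E f) (E g)

/-- (E3): positive homogeneity on bounded below variables. -/
def UE3 {Y : Type*} (E : (Y → EReal) → EReal) : Prop :=
  ∀ l : ℝ, 0 < l → ∀ f : Y → EReal, BddBelowF f →
    E (fun y => (l : EReal) * f y) = (l : EReal) * E f

/-- (E4): monotonicity on bounded below variables. -/
def UE4 {Y : Type*} (E : (Y → EReal) → EReal) : Prop :=
  ∀ f g : Y → EReal, BddBelowF f → BddBelowF g → (∀ y, f y ≤ g y) → E f ≤ E g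

/-- (E5): continuity with respect to non-decreasing sequences of non-negative variables. -/
def UE5 {Y : Type*} (E : (Y → EReal) → EReal) : Prop :=
  ∀ (fs : ℕ → Y → EReal) (f : Y → EReal),
    (∀ n y, 0 ≤ fs n y) → (∀ n y, fs n y ≤ fs (n + 1) y) →
    (∀ y, Tendsto (fun n => fs n y) atTop (𝓝 (f y))) →
    Tendsto (fun n => E (fs n)) atTop (𝓝 (E f))

/-- An upper expectation: a map satisfying (E1)–(E5). -/
def IsUpperExpectation {Y : Type*} (E : (Y → EReal) → EReal) : Prop :=
  UE1 E ∧ UE2 E ∧ UE3 E ∧ UE4 E ∧ UE5 E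

/-- The situation formed by the first `n` states of the path `ω`. -/
def pfx {X : Type*} (ω : ℕ → X) (n : ℕ) : List X := List.ofFn (fun i : Fin n => ω i)

/-- The cylinder event of all paths that go through the situation `s`. -/
def Gamma {X : Type*} (s : List X) : Set (ℕ → X) := {ω | pfx ω s.length = s}

/-- A process is bounded below. -/
def BddBelowP {X : Type*} (M : List X → EReal) : Prop := ∃ B : ℝ, ∀ t, (B : EReal) ≤ M t

/-- A supermartingale for the imprecise probabilities tree `Q`. -/
def IsSupermartingale {X : Type*} (Q : List X → (X → EReal) → EReal)
    (M : List X → EReal) : Prop :=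
  ∀ s : List X, Q s (fun x => M (s ++ [x])) ≤ M s

/-- The pathwise limit inferior of a process. -/
def liminfP {X : Type*} (M : List X → EReal) (ω : ℕ → X) : EReal :=
  Filter.liminf (fun n => M (pfx ω n)) atTop

/-- The game-theoretic upper expectation `E_V(f | s)`. -/
def upExp {X : Type*} (Q : List X → (X → EReal) → EReal)
    (f : (ℕ → X) → EReal) (s : List X) : EReal :=
  sInf {x : EReal | ∃ M : List X → EReal, IsSupermartingale Q M ∧ BddBelowP M ∧
    (∀ ω ∈ Gamma s, f ω ≤ liminfP M ω) ∧ M s = x}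

/-- An event `A` is strictly almost sure within `Γ(s)`: some `s`-test supermartingale
converges to `+∞` on every path of `Γ(s)` outside `A`. -/
def StrictlyAS {X : Type*} (Q : List X → (X → EReal) → EReal) (s : List X)
    (A : Set (ℕ → X)) : Prop :=
  ∃ T : List X → EReal, IsSupermartingale Q T ∧ (∀ t, 0 ≤ T t) ∧ T s = 1 ∧
    ∀ ω ∈ Gamma s, ω ∉ A → Tendsto (fun n => T (pfx ω n)) atTop (𝓝 (⊤ : EReal))

/-- An `n`-measurable global variable only depends on the first `n` states. -/
def NMeasurable {X : Type*} (n : ℕ) (f : (ℕ → X) → EReal) : Prop :=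
  ∀ ω ω' : ℕ → X, pfx ω n = pfx ω' n → f ω = f ω'

/-- A finitary global variable is `n`-measurable for some `n`. -/
def Finitary {X : Type*} (f : (ℕ → X) → EReal) : Prop := ∃ n : ℕ, NMeasurable n f

/-- The bounded below global variables that are pointwise limits of finitary variables. -/
def VbLim {X : Type*} : Set ((ℕ → X) → EReal) :=
  {f | BddBelowF f ∧ ∃ gs : ℕ → (ℕ → X) → EReal, (∀ n, Finitary (gs n)) ∧
    ∀ ω, Tendsto (fun n => gs n ω) atTop (𝓝 (f ω))}

/-!
Sums and positive multiples of bounded below supermartingales are again bounded below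
supermartingales, and the liminf of a sum dominates the sum of the liminfs; this gives
sub-additivity and positive homogeneity directly from the infimum defining `E_V`, while constant
supermartingales give the bound by the supremum. The lower bounds rest on one fact: since `𝒳` is
finite, `Q_t(M(t·)) ≤ M(t)` forces `M(tx) ≤ M(t)` for some state `x`, so Reality can follow a path
through `s` along which `M` never exceeds `M(s)`. Hence `E_V(c|s) = c` for real constants, which
settles `λ = 0`, gives translation invariance together with sub-additivity, and applied to
`0 ≤ f + (−f)` yields `−E_V(−f|s) ≤ E_V(f|s)`.
-/

lemma eadd_eq_add {a b : EReal} (h₁ : a ≠ ⊥ ∨ b ≠ ⊤) (h₂ : a ≠ ⊤ ∨ b ≠ ⊥) :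
    eadd a b = a + b := by
  unfold eadd
  split_ifs with h
  · rcases h with rfl | rfl
    · exact (EReal.top_add_of_ne_bot (h₂.resolve_left (not_not.2 rfl))).symm
    · exact (EReal.add_top_of_ne_bot (h₁.resolve_right (not_not.2 rfl))).symm
  · rfl

lemma eadd_coe (a : EReal) (c : ℝ) : eadd a c = a + c :=
  eadd_eq_add (.inr (EReal.coe_ne_top c)) (.inr (EReal.coe_ne_bot c))

lemma eadd_le_eadd {a b c d : EReal} (hac : a ≤ c) (hbd : b ≤ d) : eadd a b ≤ eadd c d := by
  by_cases h : c = ⊤ ∨ d = ⊤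
  · simp [eadd, h]
  · have ha : a ≠ ⊤ := fun ha => h (.inl (top_le_iff.1 (ha ▸ hac)))
    have hb : b ≠ ⊤ := fun hb => h (.inr (top_le_iff.1 (hb ▸ hbd)))
    unfold eadd
    rw [if_neg h, if_neg (by tauto)]
    exact add_le_add hac hbd

lemma zero_le_eadd_neg (a : EReal) : 0 ≤ eadd a (-a) := by
  induction a with
  | bot => simp [eadd]
  | coe x => rw [← EReal.coe_neg, eadd_coe, ← EReal.coe_add, add_neg_cancel, EReal.coe_zero]
  | top => simp [eadd]

lemma neg_le_of_zero_le_eadd {a b : EReal} (h : 0 ≤ eadd a b) : -b ≤ a := by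
  rw [eadd] at h
  split_ifs at h with hab
  · rcases hab with rfl | rfl
    · exact le_top
    · simp
  · push Not at hab
    rwa [← zero_sub, EReal.sub_le_iff_le_add (.inr hab.1) (.inl hab.2)]

lemma EReal.coe_inv_mul_coe_mul {c : ℝ} (hc : c ≠ 0) (x : EReal) :
    ((c⁻¹ : ℝ) : EReal) * ((c : EReal) * x) = x := by
  rw [← mul_assoc, ← EReal.coe_mul, inv_mul_cancel₀ hc, EReal.coe_one, one_mul]

namespace IsUpperExpectation

variable {Y : Type*} {E : (Y → EReal) → EReal}

lemma coe_le (hE : IsUpperExpectation E) {g : Y → EReal} {c : ℝ} (hc : ∀ y, (c : EReal) ≤ g y) :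
    (c : EReal) ≤ E g := by
  have := hE.2.2.2.1 (fun _ => (c : EReal)) g ⟨c, fun _ => le_rfl⟩ ⟨c, hc⟩ hc
  rwa [hE.1 c] at this

lemma exists_apply_le [Finite Y] [Nonempty Y] (hE : IsUpperExpectation E) (g : Y → EReal) :
    ∃ y, g y ≤ E g := by
  obtain ⟨y₀, hy₀⟩ := Finite.exists_min g
  exact ⟨y₀, EReal.ge_of_forall_gt_iff_ge.1 fun c hc => hE.coe_le fun y => hc.le.trans (hy₀ y)⟩

end IsUpperExpectation

section Paths

variable {X : Type*}

lemma pfx_succ (ω : ℕ → X) (n : ℕ) : pfx ω (n + 1) = pfx ω n ++ [ω n] := by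
  rw [pfx, pfx, List.ofFn_succ_last]
  rfl

def greedyPath (s : List X) (next : List X → X) (n : ℕ) : X :=
  if h : n < s.length then s[n] else next (List.ofFn fun i : Fin n => greedyPath s next i)
termination_by n
decreasing_by exact i.isLt

lemma greedyPath_mem_gamma (s : List X) (next : List X → X) : greedyPath s next ∈ Gamma s := by
  refine List.ext_getElem (by simp [pfx]) fun i hi hi' => ?_
  simp only [pfx, List.getElem_ofFn]
  rw [greedyPath, dif_pos hi']

lemma greedyPath_of_length_le (s : List X) (next : List X → X) {n : ℕ} (hn : s.length ≤ n) :
    greedyPath s next n = next (pfx (greedyPath s next) n) := by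
  rw [greedyPath, dif_neg (not_lt.2 hn), pfx]

end Paths

section Supermartingales

variable {X : Type*} {Q : List X → (X → EReal) → EReal} {M N : List X → EReal}

lemma BddBelowP.ne_bot (hM : BddBelowP M) (t : List X) : M t ≠ ⊥ :=
  let ⟨B, hB⟩ := hM
  ne_bot_of_le_ne_bot (EReal.coe_ne_bot B) (hB t)

lemma BddBelowP.liminfP_ne_bot (hM : BddBelowP M) (ω : ℕ → X) : liminfP M ω ≠ ⊥ :=
  let ⟨B, hB⟩ := hM
  ne_bot_of_le_ne_bot (EReal.coe_ne_bot B)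
    (le_liminf_of_le (by isBoundedDefault) (Eventually.of_forall fun _ => hB _))

lemma BddBelowP.add (hM : BddBelowP M) (hN : BddBelowP N) : BddBelowP (M + N) :=
  let ⟨B, hB⟩ := hM
  let ⟨C, hC⟩ := hN
  ⟨B + C, fun t => by rw [EReal.coe_add]; exact add_le_add (hB t) (hC t)⟩

lemma BddBelowP.const_mul (hM : BddBelowP M) {c : ℝ} (hc : 0 ≤ c) :
    BddBelowP fun t => (c : EReal) * M t :=
  let ⟨B, hB⟩ := hM
  ⟨c * B, fun t => by
    rw [EReal.coe_mul]; exact mul_le_mul_of_nonneg_left (hB t) (EReal.coe_nonneg.2 hc)⟩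

namespace IsSupermartingale

lemma const (hQ : ∀ s, IsUpperExpectation (Q s)) (c : ℝ) :
    IsSupermartingale Q fun _ => (c : EReal) :=
  fun t => ((hQ t).1 c).le

lemma add (hQ : ∀ s, IsUpperExpectation (Q s)) (hM : IsSupermartingale Q M)
    (hN : IsSupermartingale Q N) (hMb : BddBelowP M) (hNb : BddBelowP N) :
    IsSupermartingale Q (M + N) := by
  intro t
  have hsum : ∀ u, (M + N) u = eadd (M u) (N u) := fun u =>
    (eadd_eq_add (.inl (hMb.ne_bot u)) (.inr (hNb.ne_bot u))).symm
  obtain ⟨B, hB⟩ := hMb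
  obtain ⟨C, hC⟩ := hNb
  simp only [hsum]
  exact ((hQ t).2.1 _ _ ⟨B, fun x => hB _⟩ ⟨C, fun x => hC _⟩).trans (eadd_le_eadd (hM t) (hN t))

lemma const_mul (hQ : ∀ s, IsUpperExpectation (Q s)) (hM : IsSupermartingale Q M)
    (hMb : BddBelowP M) {c : ℝ} (hc : 0 < c) :
    IsSupermartingale Q fun t => (c : EReal) * M t := by
  intro t
  obtain ⟨B, hB⟩ := hMb
  rw [(hQ t).2.2.1 c hc _ ⟨B, fun x => hB _⟩]
  exact mul_le_mul_of_nonneg_left (hM t) (EReal.coe_nonneg.2 hc.le)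

lemma exists_liminfP_le [Finite X] [Nonempty X] (hQ : ∀ s, IsUpperExpectation (Q s))
    (hM : IsSupermartingale Q M) (s : List X) : ∃ ω ∈ Gamma s, liminfP M ω ≤ M s := by
  choose next hnext using fun t => (hQ t).exists_apply_le fun x => M (t ++ [x])
  set ω := greedyPath s next
  have hstep : ∀ n, s.length ≤ n → M (pfx ω (n + 1)) ≤ M (pfx ω n) := fun n hn => by
    rw [pfx_succ, show ω n = next (pfx ω n) from greedyPath_of_length_le s next hn]
    exact (hnext _).trans (hM _)
  have hdecr : ∀ n, s.length ≤ n → M (pfx ω n) ≤ M s := by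
    intro n hn
    induction n, hn using Nat.le_induction with
    | base => rw [greedyPath_mem_gamma s next]
    | succ n hn ih => exact (hstep n hn).trans ih
  refine ⟨ω, greedyPath_mem_gamma s next, liminf_le_of_frequently_le' ?_⟩
  exact (eventually_atTop.2 ⟨s.length, hdecr⟩).frequently

end IsSupermartingale

lemma liminfP_const (c : EReal) (ω : ℕ → X) : liminfP (fun _ => c) ω = c :=
  liminf_const c

lemma liminfP_add_le (ω : ℕ → X) : liminfP M ω + liminfP N ω ≤ liminfP (M + N) ω :=
  EReal.le_liminf_add

lemma liminfP_const_mul {c : ℝ} (hc : 0 ≤ c) (ω : ℕ → X) :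
    liminfP (fun t => (c : EReal) * M t) ω = c * liminfP M ω :=
  EReal.liminf_const_mul_of_nonneg_of_ne_top (EReal.coe_nonneg.2 hc) (EReal.coe_ne_top c)

end Supermartingales

section UpperExpectation

variable {X : Type*} {Q : List X → (X → EReal) → EReal} {f g : (ℕ → X) → EReal} {s : List X}

lemma upExp_le {M : List X → EReal} (hM : IsSupermartingale Q M) (hMb : BddBelowP M)
    (hf : ∀ ω ∈ Gamma s, f ω ≤ liminfP M ω) : upExp Q f s ≤ M s :=
  sInf_le ⟨M, hM, hMb, hf, rfl⟩

lemma le_upExp {a : EReal} (h : ∀ M : List X → EReal, IsSupermartingale Q M → BddBelowP M →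
    (∀ ω ∈ Gamma s, f ω ≤ liminfP M ω) → a ≤ M s) : a ≤ upExp Q f s :=
  le_sInf fun _ ⟨M, hM, hMb, hf, hMs⟩ => hMs ▸ h M hM hMb hf

lemma upExp_mono (h : ∀ ω ∈ Gamma s, f ω ≤ g ω) : upExp Q f s ≤ upExp Q g s :=
  le_upExp fun _ hM hMb hg => upExp_le hM hMb fun ω hω => (h ω hω).trans (hg ω hω)

lemma upExp_le_coe (hQ : ∀ s, IsUpperExpectation (Q s)) {c : ℝ}
    (hf : ∀ ω ∈ Gamma s, f ω ≤ c) : upExp Q f s ≤ c :=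
  upExp_le (M := fun _ => (c : EReal)) (.const hQ c) ⟨c, fun _ => le_rfl⟩ fun ω hω => by
    rw [liminfP_const]; exact hf ω hω

lemma upExp_le_biSup (hQ : ∀ s, IsUpperExpectation (Q s)) (f : (ℕ → X) → EReal)
    (s : List X) : upExp Q f s ≤ ⨆ ω ∈ Gamma s, f ω :=
  EReal.le_of_forall_lt_iff_le.1 fun _ hc =>
    upExp_le_coe hQ fun _ hω => (le_biSup f hω).trans hc.le

lemma biInf_le_upExp [Finite X] [Nonempty X] (hQ : ∀ s, IsUpperExpectation (Q s))
    (f : (ℕ → X) → EReal) (s : List X) : ⨅ ω ∈ Gamma s, f ω ≤ upExp Q f s :=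
  le_upExp fun _ hM _ hf =>
    let ⟨ω, hω, hlim⟩ := hM.exists_liminfP_le hQ s
    (biInf_le f hω).trans ((hf ω hω).trans hlim)

lemma upExp_const [Finite X] [Nonempty X] (hQ : ∀ s, IsUpperExpectation (Q s)) (c : ℝ)
    (s : List X) : upExp Q (fun _ => (c : EReal)) s = c :=
  le_antisymm (upExp_le_coe hQ fun _ _ => le_rfl)
    ((le_iInf₂ fun _ _ => le_rfl).trans (biInf_le_upExp hQ _ s))

lemma upExp_eadd_le (hQ : ∀ s, IsUpperExpectation (Q s)) (f g : (ℕ → X) → EReal)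
    (s : List X) : upExp Q (fun ω => eadd (f ω) (g ω)) s ≤ eadd (upExp Q f s) (upExp Q g s) := by
  by_cases htop : upExp Q f s = ⊤ ∨ upExp Q g s = ⊤
  · simp [eadd, htop]
  push Not at htop
  rw [eadd, if_neg (by tauto)]
  refine EReal.le_add_of_forall_gt (.inr htop.2) (.inl htop.1) fun a ha b hb => ?_
  obtain ⟨_, ⟨M, hM, hMb, hfM, rfl⟩, hMs⟩ := sInf_lt_iff.1 ha
  obtain ⟨_, ⟨N, hN, hNb, hgN, rfl⟩, hNs⟩ := sInf_lt_iff.1 hb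
  refine (upExp_le (hM.add hQ hN hMb hNb) (hMb.add hNb) fun ω hω => ?_).trans
    (add_le_add hMs.le hNs.le)
  calc eadd (f ω) (g ω) ≤ eadd (liminfP M ω) (liminfP N ω) := eadd_le_eadd (hfM ω hω) (hgN ω hω)
    _ = liminfP M ω + liminfP N ω :=
      eadd_eq_add (.inl (hMb.liminfP_ne_bot ω)) (.inr (hNb.liminfP_ne_bot ω))
    _ ≤ liminfP (M + N) ω := liminfP_add_le ω

lemma upExp_const_mul_le (hQ : ∀ s, IsUpperExpectation (Q s)) {c : ℝ} (hc : 0 < c)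
    (f : (ℕ → X) → EReal) (s : List X) :
    upExp Q (fun ω => (c : EReal) * f ω) s ≤ c * upExp Q f s := by
  have hc' : (0 : EReal) < c := EReal.coe_pos.2 hc
  rw [← EReal.div_le_iff_le_mul hc' (EReal.coe_ne_top c)]
  refine le_upExp fun M hM hMb hf => ?_
  rw [EReal.div_le_iff_le_mul hc' (EReal.coe_ne_top c)]
  refine upExp_le (hM.const_mul hQ hMb hc) (hMb.const_mul hc.le) fun ω hω => ?_
  rw [liminfP_const_mul hc.le]
  exact mul_le_mul_of_nonneg_left (hf ω hω) hc'.le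

lemma upExp_const_mul [Finite X] [Nonempty X] (hQ : ∀ s, IsUpperExpectation (Q s)) {c : ℝ}
    (hc : 0 ≤ c) (f : (ℕ → X) → EReal) (s : List X) :
    upExp Q (fun ω => (c : EReal) * f ω) s = c * upExp Q f s := by
  rcases hc.eq_or_lt with rfl | hc
  · simpa using upExp_const hQ 0 s
  refine le_antisymm (upExp_const_mul_le hQ hc f s) ?_
  have hinv := upExp_const_mul_le hQ (inv_pos.2 hc) (fun ω => (c : EReal) * f ω) s
  simp only [EReal.coe_inv_mul_coe_mul hc.ne'] at hinv
  calc (c : EReal) * upExp Q f s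
      ≤ c * (((c⁻¹ : ℝ) : EReal) * upExp Q (fun ω => (c : EReal) * f ω) s) :=
        mul_le_mul_of_nonneg_left hinv (EReal.coe_nonneg.2 hc.le)
    _ = upExp Q (fun ω => (c : EReal) * f ω) s := by
        simpa using EReal.coe_inv_mul_coe_mul (inv_ne_zero hc.ne') _

lemma upExp_add_coe_le [Finite X] [Nonempty X] (hQ : ∀ s, IsUpperExpectation (Q s)) (c : ℝ)
    (f : (ℕ → X) → EReal) (s : List X) :
    upExp Q (fun ω => f ω + c) s ≤ upExp Q f s + c := by
  simpa only [eadd_coe, upExp_const hQ c s] using upExp_eadd_le hQ f (fun _ => (c : EReal)) s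

lemma upExp_add_coe [Finite X] [Nonempty X] (hQ : ∀ s, IsUpperExpectation (Q s)) (c : ℝ)
    (f : (ℕ → X) → EReal) (s : List X) :
    upExp Q (fun ω => f ω + c) s = upExp Q f s + c := by
  refine le_antisymm (upExp_add_coe_le hQ c f s) ?_
  have hsub := upExp_add_coe_le hQ (-c) (fun ω => f ω + c) s
  simp only [EReal.coe_neg, ← sub_eq_add_neg, EReal.add_sub_cancel_right] at hsub
  rwa [← EReal.le_sub_iff_add_le (.inl (EReal.coe_ne_bot c)) (.inl (EReal.coe_ne_top c))]

lemma biInf_le_neg_upExp_neg (hQ : ∀ s, IsUpperExpectation (Q s)) (f : (ℕ → X) → EReal)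
    (s : List X) : ⨅ ω ∈ Gamma s, f ω ≤ -upExp Q (fun ω => -f ω) s :=
  EReal.le_neg_of_le_neg <| (upExp_le_biSup hQ _ s).trans <|
    iSup₂_le fun _ hω => EReal.neg_le_neg_iff.2 (biInf_le f hω)

lemma neg_upExp_neg_le_upExp [Finite X] [Nonempty X] (hQ : ∀ s, IsUpperExpectation (Q s))
    (f : (ℕ → X) → EReal) (s : List X) : -upExp Q (fun ω => -f ω) s ≤ upExp Q f s := by
  refine neg_le_of_zero_le_eadd ?_
  calc (0 : EReal) = upExp Q (fun _ => ((0 : ℝ) : EReal)) s := (upExp_const hQ 0 s).symm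
    _ ≤ upExp Q (fun ω => eadd (f ω) (-f ω)) s := upExp_mono fun ω _ => zero_le_eadd_neg (f ω)
    _ ≤ eadd (upExp Q f s) (upExp Q (fun ω => -f ω) s) := upExp_eadd_le hQ _ _ s

end UpperExpectation

/-- coherence properties (V1)–(V6) of the game-theoretic upper expectation,
where sums use the convention `(+∞) + (−∞) = +∞`. -/
theorem stmt5 {X : Type*} [Fintype X] [Nonempty X]
    (Q : List X → (X → EReal) → EReal) (hQ : ∀ s : List X, IsUpperExpectation (Q s))
    (f g : (ℕ → X) → EReal) (l : ℝ) (hl : 0 ≤ l) (μ : ℝ) (s : List X) :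
    (upExp Q f s ≤ ⨆ ω ∈ Gamma s, f ω) ∧
    (upExp Q (fun ω => eadd (f ω) (g ω)) s ≤ eadd (upExp Q f s) (upExp Q g s)) ∧
    (upExp Q (fun ω => (l : EReal) * f ω) s = (l : EReal) * upExp Q f s) ∧
    ((∀ ω ∈ Gamma s, f ω ≤ g ω) → upExp Q f s ≤ upExp Q g s) ∧
    ((⨅ ω ∈ Gamma s, f ω) ≤ -upExp Q (fun ω => -f ω) s ∧
      -upExp Q (fun ω => -f ω) s ≤ upExp Q f s ∧
      upExp Q f s ≤ ⨆ ω ∈ Gamma s, f ω) ∧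
    (upExp Q (fun ω => f ω + (μ : EReal)) s = upExp Q f s + (μ : EReal)) :=
  ⟨upExp_le_biSup hQ f s, upExp_eadd_le hQ f g s, upExp_const_mul hQ hl f s, upExp_mono,
    ⟨biInf_le_neg_upExp_neg hQ f s, neg_upExp_neg_le_upExp hQ f s, upExp_le_biSup hQ f s⟩,
    upExp_add_coe hQ μ f s⟩
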